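/- arXiv:2007.10950 — 2 statements merged into one kernel-verified Lean document; each statement's English description precedes it below -/
import Mathlib

section
/- Monotonicity of the local EP rate under unit inclusion: let X = X_α × X_β be a product of finite sets, K a strictly-positive-off-diagonal rate matrix on X, p a strictly positive distribution on X, and suppose the marginal rate matrix K_α(x'_α → x_α) := ∑_{x_β} K((x'_α,x'_β) → (x_α,x_β)) is independent of x'_β. Then the EP rate of the full system, ∑ K(x'→x)p(x') ln[K(x'→x)p(x')/(K(x→x')p(x))], is at least the EP rate of the marginal system, ∑ K_α(x'_α→x_α)p_α(x'_α) ln[K_α(x'_α→x_α)p_α(x'_α)/(K_α(x_α→x'_α)p_α(x_α))], where p_α is the marginal of p. -/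
open BigOperators Finset

/-- log-sum inequality. -/
lemma my_log_sum_ineq {ι : Type*} (s : Finset ι) (u v : ι → ℝ)
    (hu : ∀ i ∈ s, 0 < u i) (hv : ∀ i ∈ s, 0 < v i) :
    (∑ i ∈ s, u i) * Real.log ((∑ i ∈ s, u i) / (∑ i ∈ s, v i)) ≤
      ∑ i ∈ s, u i * Real.log (u i / v i) := by
  rcases s.eq_empty_or_nonempty with rfl | hs
  · simp
  set U := ∑ i ∈ s, u i with hU
  set V := ∑ i ∈ s, v i with hV
  have hU0 : 0 < U := Finset.sum_pos hu hs
  have hV0 : 0 < V := Finset.sum_pos hv hs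
  have key : ∀ i ∈ s, u i * Real.log (U / V) + (u i - v i * (U / V)) ≤
      u i * Real.log (u i / v i) := by
    intro i hi
    have hui := hu i hi
    have hvi := hv i hi
    have h1 : Real.log (v i * U / (u i * V)) ≤ v i * U / (u i * V) - 1 :=
      Real.log_le_sub_one_of_pos (by positivity)
    have hlog : Real.log (v i * U / (u i * V)) =
        Real.log (v i) + Real.log U - Real.log (u i) - Real.log V := by
      rw [Real.log_div (by positivity) (by positivity),
        Real.log_mul hvi.ne' hU0.ne', Real.log_mul hui.ne' hV0.ne']
      ring
    have hlog2 : Real.log (u i / v i) = Real.log (u i) - Real.log (v i) :=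
      Real.log_div hui.ne' hvi.ne'
    have hlog3 : Real.log (U / V) = Real.log U - Real.log V :=
      Real.log_div hU0.ne' hV0.ne'
    have h2 : Real.log (U / V) + 1 - v i * U / (u i * V) ≤ Real.log (u i / v i) := by
      rw [hlog2, hlog3]; rw [hlog] at h1; linarith
    have h3 : u i * (Real.log (U / V) + 1 - v i * U / (u i * V)) ≤
        u i * Real.log (u i / v i) := mul_le_mul_of_nonneg_left h2 hui.le
    have h4 : u i * (Real.log (U / V) + 1 - v i * U / (u i * V)) =
        u i * Real.log (U / V) + (u i - v i * (U / V)) := by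
      field_simp
      ring
    linarith [h3, h4.symm.trans_le h3]
  have hsum : ∑ i ∈ s, (u i * Real.log (U / V) + (u i - v i * (U / V))) =
      U * Real.log (U / V) := by
    rw [Finset.sum_add_distrib, Finset.sum_sub_distrib, ← Finset.sum_mul, ← Finset.sum_mul,
      ← hU, ← hV]
    have : V * (U / V) = U := by field_simp
    rw [this]; ring
  calc U * Real.log (U / V) = _ := hsum.symm
    _ ≤ ∑ i ∈ s, u i * Real.log (u i / v i) := Finset.sum_le_sum key

lemma my_sub_le_mul_log {u v : ℝ} (hu : 0 < u) (hv : 0 < v) :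
    u - v ≤ u * Real.log (u / v) := by
  have h1 : Real.log (v / u) ≤ v / u - 1 := Real.log_le_sub_one_of_pos (by positivity)
  have h2 : Real.log (u / v) = - Real.log (v / u) := by
    rw [← Real.log_inv]; congr 1; field_simp
  have h3 : 1 - v / u ≤ Real.log (u / v) := by rw [h2]; linarith
  have h4 := mul_le_mul_of_nonneg_left h3 hu.le
  have h5 : u * (1 - v / u) = u - v := by field_simp
  linarith

/-- Monotonicity of the local EP rate under unit inclusion: if the marginal
dynamics of subsystem `α` is autonomous (the marginal rate matrix `Kα` is well
defined, independent of the state of `β`), then the EP rate of the full system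
is at least the EP rate of the marginal system. -/
theorem ep_rate_monotone_unit_inclusion
    {Xa Xb : Type*} [Fintype Xa] [Fintype Xb] [Nonempty Xa] [Nonempty Xb]
    [DecidableEq Xa] [DecidableEq Xb]
    (K : Xa × Xb → Xa × Xb → ℝ) (Ka : Xa → Xa → ℝ) (p : Xa × Xb → ℝ)
    (hK : ∀ x x', x ≠ x' → 0 < K x' x)
    (hK0 : ∀ x', ∑ x, K x' x = 0)
    (hcons : ∀ a' a (b' : Xb), Ka a' a = ∑ b, K (a', b') (a, b))
    (hp : ∀ x, 0 < p x) (hsum : ∑ x, p x = 1) :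
    (∑ a', ∑ a, if a ≠ a' then
        Ka a' a * (∑ b, p (a', b)) *
          Real.log (Ka a' a * (∑ b, p (a', b)) / (Ka a a' * (∑ b, p (a, b))))
      else 0)
    ≤ ∑ x', ∑ x, if x ≠ x' then
        K x' x * p x' * Real.log (K x' x * p x' / (K x x' * p x)) else 0 := by
  have hRHS : (∑ x' : Xa × Xb, ∑ x : Xa × Xb, if x ≠ x' then
        K x' x * p x' * Real.log (K x' x * p x' / (K x x' * p x)) else 0)
      = ∑ a', ∑ a, ∑ b' : Xb, ∑ b : Xb, if (a, b) ≠ (a', b') then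
        K (a', b') (a, b) * p (a', b') *
          Real.log (K (a', b') (a, b) * p (a', b') / (K (a, b) (a', b') * p (a, b)))
        else 0 := by
    simp only [Fintype.sum_prod_type]
    exact Finset.sum_congr rfl fun a' _ => Finset.sum_comm
  rw [hRHS]
  refine Finset.sum_le_sum fun a' _ => Finset.sum_le_sum fun a _ => ?_
  by_cases hav : a = a'
  · -- diagonal block: LHS term is 0, RHS block nonnegative
    rw [if_neg (by simpa using hav)]
    subst hav
    have hzero : (0 : ℝ) = ∑ b' : Xb, ∑ b : Xb,
        (if b ≠ b' then (K (a, b') (a, b) * p (a, b') - K (a, b) (a, b') * p (a, b)) else 0) := by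
      have hsplit : ∀ (b' b : Xb),
          (if b ≠ b' then (K (a, b') (a, b) * p (a, b') - K (a, b) (a, b') * p (a, b)) else 0)
          = (if b ≠ b' then K (a, b') (a, b) * p (a, b') else 0)
            - (if b ≠ b' then K (a, b) (a, b') * p (a, b) else 0) := by
        intro b' b; by_cases h : b = b' <;> simp [h]
      simp only [hsplit, Finset.sum_sub_distrib]
      have hsym : (∑ b' : Xb, ∑ b : Xb, (if b ≠ b' then K (a, b) (a, b') * p (a, b) else 0))
          = ∑ b' : Xb, ∑ b : Xb, (if b ≠ b' then K (a, b') (a, b) * p (a, b') else 0) := by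
        rw [Finset.sum_comm]
        exact Finset.sum_congr rfl fun b' _ => Finset.sum_congr rfl fun b _ =>
          if_congr ne_comm rfl rfl
      rw [hsym]; ring
    refine le_trans hzero.le
      (Finset.sum_le_sum fun b' _ => Finset.sum_le_sum fun b _ => ?_)
    by_cases hbb : b = b'
    · simp [hbb]
    · have hne : (a, b) ≠ (a, b') := fun h => hbb (congrArg Prod.snd h)
      rw [if_pos hbb, if_pos hne]
      exact my_sub_le_mul_log (mul_pos (hK _ _ hne) (hp _))
        (mul_pos (hK _ _ (Ne.symm hne)) (hp _))
  · -- off-diagonal block: use log-sum inequality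
    rw [if_pos hav]
    set u : Xb × Xb → ℝ := fun bb => K (a', bb.1) (a, bb.2) * p (a', bb.1) with hu_def
    set v : Xb × Xb → ℝ := fun bb => K (a, bb.2) (a', bb.1) * p (a, bb.2) with hv_def
    have hune : ∀ b' b : Xb, (a, b) ≠ (a', b') := fun b' b h => hav (congrArg Prod.fst h)
    have hupos : ∀ bb : Xb × Xb, bb ∈ Finset.univ → 0 < u bb := fun bb _ =>
      mul_pos (hK _ _ (hune bb.1 bb.2)) (hp _)
    have hvpos : ∀ bb : Xb × Xb, bb ∈ Finset.univ → 0 < v bb := fun bb _ =>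
      mul_pos (hK _ _ (Ne.symm (hune bb.1 bb.2))) (hp _)
    have hU : ∑ bb : Xb × Xb, u bb = Ka a' a * ∑ b, p (a', b) := by
      rw [Fintype.sum_prod_type]
      calc ∑ b' : Xb, ∑ b : Xb, K (a', b') (a, b) * p (a', b')
          = ∑ b' : Xb, (∑ b : Xb, K (a', b') (a, b)) * p (a', b') := by
            exact Finset.sum_congr rfl fun b' _ => (Finset.sum_mul ..).symm
        _ = ∑ b' : Xb, Ka a' a * p (a', b') := by
            exact Finset.sum_congr rfl fun b' _ => by rw [← hcons]
        _ = Ka a' a * ∑ b, p (a', b) := by rw [Finset.mul_sum]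
    have hV : ∑ bb : Xb × Xb, v bb = Ka a a' * ∑ b, p (a, b) := by
      rw [Fintype.sum_prod_type, Finset.sum_comm]
      calc ∑ b : Xb, ∑ b' : Xb, K (a, b) (a', b') * p (a, b)
          = ∑ b : Xb, (∑ b' : Xb, K (a, b) (a', b')) * p (a, b) := by
            exact Finset.sum_congr rfl fun b _ => (Finset.sum_mul ..).symm
        _ = ∑ b : Xb, Ka a a' * p (a, b) := by
            exact Finset.sum_congr rfl fun b _ => by rw [← hcons]
        _ = Ka a a' * ∑ b, p (a, b) := by rw [Finset.mul_sum]
    have hT : (∑ b' : Xb, ∑ b : Xb, if (a, b) ≠ (a', b') then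
          K (a', b') (a, b) * p (a', b') *
            Real.log (K (a', b') (a, b) * p (a', b') / (K (a, b) (a', b') * p (a, b)))
          else 0)
        = ∑ bb : Xb × Xb, u bb * Real.log (u bb / v bb) := by
      rw [Fintype.sum_prod_type]
      exact Finset.sum_congr rfl fun b' _ => Finset.sum_congr rfl fun b _ =>
        if_pos (hune b' b)
    rw [hT, ← hU, ← hV]
    exact my_log_sum_ineq Finset.univ u v hupos hvpos
end

section
/- Positivity construction in Proposition 2's proof: let 𝒩* be an intersection-closed no-orphan cover of finite 𝒩 with at least two maximal elements (root units), with alphabet sizes |Xᵢ| ≥ 2, and let T = ⋃_{ω maximal} ω̄. Define p on ∏ᵢ Xᵢ by fixing all coordinates outside T to a constant and setting the coordinates in T perfectly correlated and uniform over M := minᵢ|Xᵢ| joint values. Then the in-ex information of p with respect to 𝒩* equals (R-1)·ln M > 0, where R ≥ 2 is the number of maximal units. -/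
open BigOperators

noncomputable def shannonEntropy {α : Type*} [Fintype α] (q : α → ℝ) : ℝ :=
  -∑ a, q a * Real.log (q a)

/-- Marginal of a distribution on `∏ i, Fin (m i)` over the subsystems in `ω`. -/
noncomputable def marginal {n : ℕ} (m : Fin n → ℕ)
    (p : (∀ i, Fin (m i)) → ℝ) (ω : Finset (Fin n)) :
    (∀ i : ω, Fin (m i.1)) → ℝ :=
  fun y => ∑ x, if (∀ i : ω, x i.1 = y i) then p x else 0

/-- Inclusion-exclusion sum of `σ` over a family of units. -/
noncomputable def inExSum {n : ℕ} (σ : Finset (Fin n) → ℝ)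
    (F : Finset (Finset (Fin n))) : ℝ :=
  ∑ J ∈ F.powerset.filter (fun J => J.Nonempty),
    (-1 : ℝ) ^ (J.card + 1) * σ (J.inf id)

/-- In-ex information of a distribution with respect to a family of units. -/
noncomputable def inExInfo {n : ℕ} (m : Fin n → ℕ)
    (p : (∀ i, Fin (m i)) → ℝ) (F : Finset (Finset (Fin n))) : ℝ :=
  inExSum (fun ω => shannonEntropy (marginal m p ω)) F - shannonEntropy p

/-- The maximal (root) units of a family. -/
def rootUnits {n : ℕ} (F : Finset (Finset (Fin n))) : Finset (Finset (Fin n)) :=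
  F.filter (fun ω => ∀ ω' ∈ F, ¬ ω ⊂ ω')

/-- The exclusive part `ω̄` of a unit: elements in no proper sub-member. -/
def exclusivePart {n : ℕ} (F : Finset (Finset (Fin n))) (ω : Finset (Fin n)) :
    Finset (Fin n) :=
  ω \ (F.filter (· ⊂ ω)).sup id

/-! Under `p` the coordinates in `T` carry one common uniform value in `Fin M` and the others are
fixed, so `p` is the image of the uniform distribution on `Fin M`. Its marginal on a unit `ω` is
uniform on `M` points if `ω` meets `T` and a point mass otherwise. A point of the exclusive part of
a root lies in no other unit, since intersecting that unit with the root would give a proper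
sub-unit containing the point; so the only intersections of units meeting `T` are the roots
themselves. The inclusion-exclusion sum is therefore `R log M`, and subtracting `H(p) = log M`
leaves `(R - 1) log M`. -/

section PushUniform

variable {ι α : Type*} [Fintype ι] [DecidableEq α]

theorem shannonEntropy_uniformOn [Fintype α] (s : Finset α) :
    shannonEntropy (fun a => if a ∈ s then (s.card : ℝ)⁻¹ else 0) = Real.log s.card := by
  rcases s.eq_empty_or_nonempty with rfl | hs
  · simp [shannonEntropy]
  have hcard : (s.card : ℝ) ≠ 0 := by exact_mod_cast hs.card_pos.ne'
  simp only [shannonEntropy, apply_ite (fun t : ℝ => t * Real.log t), zero_mul,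
    Finset.sum_ite_mem, Finset.univ_inter, Finset.sum_const, nsmul_eq_mul, Real.log_inv]
  field_simp

noncomputable def pushUniform (g : ι → α) : α → ℝ :=
  fun a => ∑ k, if g k = a then (Fintype.card ι : ℝ)⁻¹ else 0

theorem pushUniform_of_injective {g : ι → α} (hg : Function.Injective g) (a : α) :
    pushUniform g a = if a ∈ Finset.univ.image g then (Fintype.card ι : ℝ)⁻¹ else 0 := by
  classical
  rw [pushUniform]
  split_ifs with ha
  · obtain ⟨k, -, rfl⟩ := Finset.mem_image.mp ha
    simp only [hg.eq_iff, Finset.sum_ite_eq', Finset.mem_univ, if_true]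
  · exact Finset.sum_eq_zero fun k _ => if_neg fun hk => ha (Finset.mem_image.mpr ⟨k, by simp, hk⟩)

theorem shannonEntropy_pushUniform_of_injective [Fintype α] {g : ι → α}
    (hg : Function.Injective g) :
    shannonEntropy (pushUniform g) = Real.log (Fintype.card ι) := by
  have h := shannonEntropy_uniformOn (Finset.univ.image g)
  rw [Finset.card_image_of_injective _ hg, Finset.card_univ] at h
  rw [← h, funext (pushUniform_of_injective hg)]

theorem shannonEntropy_pushUniform_const [Fintype α] [Nonempty ι] (a : α) :
    shannonEntropy (pushUniform fun _ : ι => a) = 0 := by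
  have h := shannonEntropy_uniformOn {a}
  rw [Finset.card_singleton, Nat.cast_one, Real.log_one] at h
  rw [← h]
  congr 1
  funext b
  simp [pushUniform, eq_comm]

theorem marginal_pushUniform {n : ℕ} {m : Fin n → ℕ} (g : ι → ∀ i, Fin (m i))
    (ω : Finset (Fin n)) :
    marginal m (pushUniform g) ω = pushUniform fun k (i : ω) => g k i := by
  funext y
  simp only [marginal, pushUniform]
  rw [← Finset.sum_filter, Finset.sum_comm]
  simp only [Finset.sum_ite_eq, Finset.mem_filter, Finset.mem_univ, true_and]
  simp only [funext_iff]

end PushUniform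

section CorrelatedPoint

variable {n M : ℕ} {m : Fin n → ℕ} (hM : ∀ i, M ≤ m i) (T : Finset (Fin n)) (c : ∀ i, Fin (m i))

def correlatedPoint (k : Fin M) : ∀ i, Fin (m i) :=
  fun i => if i ∈ T then Fin.castLE (hM i) k else c i

variable {T}

theorem correlatedPoint_val_of_mem (k : Fin M) {i : Fin n} (hi : i ∈ T) :
    (correlatedPoint hM T c k i : ℕ) = k := by
  simp [correlatedPoint, hi]

theorem correlatedPoint_of_notMem (k : Fin M) {i : Fin n} (hi : i ∉ T) :
    correlatedPoint hM T c k i = c i := by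
  simp [correlatedPoint, hi]

theorem exists_correlatedPoint_eq_iff (x : ∀ i, Fin (m i)) :
    (∃ k, correlatedPoint hM T c k = x) ↔
      (∃ k : Fin M, ∀ i ∈ T, (x i : ℕ) = k) ∧ ∀ i ∉ T, x i = c i := by
  constructor
  · rintro ⟨k, rfl⟩
    exact ⟨⟨k, fun i hi => correlatedPoint_val_of_mem hM c k hi⟩,
      fun i hi => correlatedPoint_of_notMem hM c k hi⟩
  · rintro ⟨⟨k, hk⟩, hc⟩
    refine ⟨k, funext fun i => ?_⟩
    by_cases hi : i ∈ T
    · exact Fin.ext ((correlatedPoint_val_of_mem hM c k hi).trans (hk i hi).symm)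
    · exact (correlatedPoint_of_notMem hM c k hi).trans (hc i hi).symm

theorem correlatedPoint_injective (hT : T.Nonempty) :
    Function.Injective (correlatedPoint hM T c) := by
  obtain ⟨j, hj⟩ := hT
  intro k k' h
  apply Fin.ext
  rw [← correlatedPoint_val_of_mem hM c k hj, ← correlatedPoint_val_of_mem hM c k' hj, h]

theorem restrict_correlatedPoint_injective {ω : Finset (Fin n)} (hω : (ω ∩ T).Nonempty) :
    Function.Injective fun k (i : ω) => correlatedPoint hM T c k i := by
  obtain ⟨j, hj⟩ := hω
  rw [Finset.mem_inter] at hj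
  intro k k' h
  apply Fin.ext
  rw [← correlatedPoint_val_of_mem hM c k hj.2, ← correlatedPoint_val_of_mem hM c k' hj.2]
  exact congrArg Fin.val (congrFun h ⟨j, hj.1⟩)

theorem restrict_correlatedPoint_of_not_nonempty {ω : Finset (Fin n)} (hω : ¬(ω ∩ T).Nonempty) :
    (fun k (i : ω) => correlatedPoint hM T c k i) = fun _ (i : ω) => c i :=
  funext fun k => funext fun i =>
    correlatedPoint_of_notMem hM c k fun hi => hω ⟨i, Finset.mem_inter.mpr ⟨i.2, hi⟩⟩

theorem shannonEntropy_marginal_correlatedPoint (hM0 : 0 < M) (ω : Finset (Fin n)) :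
    shannonEntropy (marginal m (pushUniform (correlatedPoint hM T c)) ω) =
      if (ω ∩ T).Nonempty then Real.log M else 0 := by
  have : Nonempty (Fin M) := ⟨⟨0, hM0⟩⟩
  rw [marginal_pushUniform]
  split_ifs with hω
  · rw [shannonEntropy_pushUniform_of_injective (restrict_correlatedPoint_injective hM c hω),
      Fintype.card_fin]
  · rw [restrict_correlatedPoint_of_not_nonempty hM c hω]
    exact shannonEntropy_pushUniform_const _

end CorrelatedPoint

section Units

variable {n : ℕ} {F : Finset (Finset (Fin n))}

theorem mem_exclusivePart {ω : Finset (Fin n)} {i : Fin n} :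
    i ∈ exclusivePart F ω ↔ i ∈ ω ∧ ∀ ω' ∈ F, ω' ⊂ ω → i ∉ ω' := by
  simp [exclusivePart]

theorem exclusivePart_nonempty (horphan : ∀ ω ∈ F, ∃ i ∈ ω, ∀ ω' ∈ F, ω' ⊂ ω → i ∉ ω')
    {ω : Finset (Fin n)} (hω : ω ∈ F) : (exclusivePart F ω).Nonempty :=
  let ⟨i, hiω, hi⟩ := horphan ω hω
  ⟨i, mem_exclusivePart.mpr ⟨hiω, hi⟩⟩

theorem eq_of_mem_exclusivePart_of_mem_rootUnits
    (hclosed : ∀ ω ∈ F, ∀ ω' ∈ F, (ω ∩ ω').Nonempty → ω ∩ ω' ∈ F)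
    {ω₀ ω : Finset (Fin n)} {i : Fin n} (hω₀ : ω₀ ∈ rootUnits F) (hi : i ∈ exclusivePart F ω₀)
    (hω : ω ∈ F) (hiω : i ∈ ω) : ω = ω₀ := by
  obtain ⟨hω₀F, hroot⟩ := Finset.mem_filter.mp hω₀
  obtain ⟨hiω₀, hexcl⟩ := mem_exclusivePart.mp hi
  have hiInter : i ∈ ω ∩ ω₀ := Finset.mem_inter.mpr ⟨hiω, hiω₀⟩
  have hInter : ω ∩ ω₀ = ω₀ := by
    by_contra hne
    exact hexcl _ (hclosed ω hω ω₀ hω₀F ⟨i, hiInter⟩)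
      (ssubset_of_subset_of_ne Finset.inter_subset_right hne) hiInter
  by_contra hne
  exact hroot ω hω (ssubset_of_subset_of_ne (hInter ▸ Finset.inter_subset_left) (Ne.symm hne))

theorem inf_inter_sup_exclusivePart_nonempty_iff
    (hclosed : ∀ ω ∈ F, ∀ ω' ∈ F, (ω ∩ ω').Nonempty → ω ∩ ω' ∈ F)
    (horphan : ∀ ω ∈ F, ∃ i ∈ ω, ∀ ω' ∈ F, ω' ⊂ ω → i ∉ ω')
    {J : Finset (Finset (Fin n))} (hJF : J ⊆ F) (hJ : J.Nonempty) :
    (J.inf id ∩ (rootUnits F).sup (exclusivePart F)).Nonempty ↔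
      ∃ ω ∈ rootUnits F, J = {ω} := by
  constructor
  · rintro ⟨i, hi⟩
    obtain ⟨hiInf, hiT⟩ := Finset.mem_inter.mp hi
    obtain ⟨ω₀, hω₀, hiω₀⟩ := Finset.mem_sup.mp hiT
    refine ⟨ω₀, hω₀, Finset.eq_singleton_iff_nonempty_unique_mem.mpr ⟨hJ, fun ω hω => ?_⟩⟩
    exact eq_of_mem_exclusivePart_of_mem_rootUnits hclosed hω₀ hiω₀ (hJF hω)
      ((Finset.inf_le hω : J.inf id ≤ ω) hiInf)
  · rintro ⟨ω, hω, rfl⟩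
    obtain ⟨i, hi⟩ := exclusivePart_nonempty horphan (Finset.mem_filter.mp hω).1
    rw [Finset.inf_singleton]
    exact ⟨i, Finset.mem_inter.mpr ⟨(mem_exclusivePart.mp hi).1, Finset.mem_sup.mpr ⟨ω, hω, hi⟩⟩⟩

theorem inExSum_ite_inter_sup_exclusivePart_nonempty
    (hclosed : ∀ ω ∈ F, ∀ ω' ∈ F, (ω ∩ ω').Nonempty → ω ∩ ω' ∈ F)
    (horphan : ∀ ω ∈ F, ∃ i ∈ ω, ∀ ω' ∈ F, ω' ⊂ ω → i ∉ ω') (a : ℝ) :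
    inExSum (fun ω => if (ω ∩ (rootUnits F).sup (exclusivePart F)).Nonempty then a else 0) F =
      (rootUnits F).card * a := by
  have hfilter : ((F.powerset.filter fun J => J.Nonempty).filter fun J =>
      (J.inf id ∩ (rootUnits F).sup (exclusivePart F)).Nonempty) =
      (rootUnits F).image singleton := by
    ext J
    simp only [Finset.mem_filter, Finset.mem_powerset, Finset.mem_image, eq_comm (b := J)]
    constructor
    · rintro ⟨⟨hJF, hJ⟩, hmeet⟩
      exact (inf_inter_sup_exclusivePart_nonempty_iff hclosed horphan hJF hJ).mp hmeet
    · rintro ⟨ω, hω, rfl⟩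
      have hJF : {ω} ⊆ F := Finset.singleton_subset_iff.mpr (Finset.mem_filter.mp hω).1
      exact ⟨⟨hJF, Finset.singleton_nonempty ω⟩,
        (inf_inter_sup_exclusivePart_nonempty_iff hclosed horphan hJF
          (Finset.singleton_nonempty ω)).mpr ⟨ω, hω, rfl⟩⟩
  simp only [inExSum, mul_ite, mul_zero]
  rw [← Finset.sum_filter, hfilter, Finset.sum_image fun _ _ _ _ h => Finset.singleton_injective h]
  simp

end Units

theorem positivity_construction_general {n : ℕ} (m : Fin n → ℕ) (hm : ∀ i, 2 ≤ m i)
    (F : Finset (Finset (Fin n)))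
    (hclosed : ∀ ω ∈ F, ∀ ω' ∈ F, (ω ∩ ω').Nonempty → ω ∩ ω' ∈ F)
    (horphan : ∀ ω ∈ F, ∃ i ∈ ω, ∀ ω' ∈ F, ω' ⊂ ω → i ∉ ω')
    (hR : 2 ≤ (rootUnits F).card)
    (M : ℕ) (hM1 : ∀ i, M ≤ m i) (hM2 : ∃ i, m i = M)
    (c : ∀ i, Fin (m i))
    (p : (∀ i, Fin (m i)) → ℝ)
    (hp : ∀ x, p x =
      if (∃ k : Fin M, ∀ i ∈ (rootUnits F).sup (exclusivePart F), (x i : ℕ) = (k : ℕ)) ∧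
         (∀ i ∉ (rootUnits F).sup (exclusivePart F), x i = c i)
      then (M : ℝ)⁻¹ else 0) :
    inExInfo m p F = (((rootUnits F).card : ℝ) - 1) * Real.log M ∧
    0 < inExInfo m p F := by
  set T := (rootUnits F).sup (exclusivePart F)
  have hM : 2 ≤ M := by obtain ⟨i, rfl⟩ := hM2; exact hm i
  have hT : T.Nonempty := by
    obtain ⟨ω, hω⟩ := Finset.card_pos.mp (by omega : 0 < (rootUnits F).card)
    obtain ⟨i, hi⟩ := exclusivePart_nonempty horphan (Finset.mem_filter.mp hω).1
    exact ⟨i, Finset.mem_sup.mpr ⟨ω, hω, hi⟩⟩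
  have hinj : Function.Injective (correlatedPoint hM1 T c) := correlatedPoint_injective hM1 c hT
  have hp_eq : p = pushUniform (correlatedPoint hM1 T c) := by
    funext x
    rw [hp, pushUniform_of_injective hinj, Fintype.card_fin]
    simp only [Finset.mem_image, Finset.mem_univ, true_and, exists_correlatedPoint_eq_iff]
  have hinfo : inExInfo m p F = (((rootUnits F).card : ℝ) - 1) * Real.log M := by
    rw [inExInfo, hp_eq]
    simp only [shannonEntropy_marginal_correlatedPoint hM1 c (by omega : 0 < M)]
    rw [inExSum_ite_inter_sup_exclusivePart_nonempty hclosed horphan,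
      shannonEntropy_pushUniform_of_injective hinj, Fintype.card_fin]
    ring
  refine ⟨hinfo, hinfo ▸ mul_pos ?_ (Real.log_pos (by exact_mod_cast hM))⟩
  have : (2 : ℝ) ≤ (rootUnits F).card := by exact_mod_cast hR
  linarith

/-- Positivity construction of Proposition 2: for an intersection-closed,
no-orphan cover with `R ≥ 2` root units, alphabets of size `≥ 2`, and the
distribution that fixes the coordinates outside `T = ⋃_{ω root} ω̄` and sets
the coordinates in `T` perfectly correlated and uniform over `M = minᵢ|Xᵢ|`
joint values, the in-ex information equals `(R-1)·ln M > 0`. -/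
theorem positivity_construction {n : ℕ} (m : Fin n → ℕ) (hm : ∀ i, 2 ≤ m i)
    (F : Finset (Finset (Fin n)))
    (hcover : F.sup id = Finset.univ)
    (hne : ∀ ω ∈ F, ω.Nonempty)
    (hclosed : ∀ ω ∈ F, ∀ ω' ∈ F, (ω ∩ ω').Nonempty → ω ∩ ω' ∈ F)
    (horphan : ∀ ω ∈ F, ∃ i ∈ ω, ∀ ω' ∈ F, ω' ⊂ ω → i ∉ ω')
    (hR : 2 ≤ (rootUnits F).card)
    (M : ℕ) (hM1 : ∀ i, M ≤ m i) (hM2 : ∃ i, m i = M)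
    (c : ∀ i, Fin (m i))
    (p : (∀ i, Fin (m i)) → ℝ)
    (hp : ∀ x, p x =
      if (∃ k : Fin M, ∀ i ∈ (rootUnits F).sup (exclusivePart F), (x i : ℕ) = (k : ℕ)) ∧
         (∀ i ∉ (rootUnits F).sup (exclusivePart F), x i = c i)
      then (M : ℝ)⁻¹ else 0) :
    inExInfo m p F = (((rootUnits F).card : ℝ) - 1) * Real.log M ∧
    0 < inExInfo m p F :=
  positivity_construction_general m hm F hclosed horphan hR M hM1 hM2 c p hp
end
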